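/- Let A, B, C be dg algebras with enough idempotents, and let P and Q be dg C-A-bimodules such that P is homotopically projective and Q is homotopically injective as right dg A-modules. Then: (1) the functor HOM̄_A(P,?) : B-Dg-A → B-Dg-C takes acyclic dg B-A-bimodules to acyclic dg B-C-bimodules; (2) the functor HOM̄_A(?,Q) : (B-Dg-A)^{op} → C-Dg-B takes acyclic dg B-A-bimodules to acyclic dg C-B-bimodules. -/

import Mathlib

open DirectSum

noncomputable section

/-- The Koszul sign `(-1)^n` for an integer `n`. -/
def sgn (n : ℤ) : ℤ := ((-1 : ℤˣ) ^ n : ℤˣ)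

/-- A differential graded algebra with enough idempotents over the commutative
ground ring `K`:  a (possibly non-unital) associative `K`-algebra with a
`ℤ`-grading (given by an internal direct sum of `K`-submodules), a distinguished
family of nonzero orthogonal homogeneous idempotents of degree `0` such that
`A = ⊕ eᵢA = ⊕ Aeᵢ`, and a square-zero differential of degree `+1` which kills
the distinguished idempotents and satisfies the graded Leibniz rule. -/
structure DGAlgebra (K : Type) [CommRing K] : Type 1 where
  carrier : Type
  [ring : NonUnitalRing carrier]
  [mod : Module K carrier]
  [smulComm : SMulCommClass K carrier carrier]
  [tower : IsScalarTower K carrier carrier]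
  deg : ℤ → Submodule K carrier
  internal : DirectSum.IsInternal deg
  mul_mem : ∀ {i j : ℤ} {a b : carrier}, a ∈ deg i → b ∈ deg j → a * b ∈ deg (i + j)
  ι : Type
  [decEq : DecidableEq ι]
  e : ι → carrier
  e_ne : ∀ i, e i ≠ 0
  e_idem : ∀ i, e i * e i = e i
  e_orth : ∀ {i j : ι}, i ≠ j → e i * e j = 0
  e_deg : ∀ i, e i ∈ deg 0
  enough_left : DirectSum.IsInternal fun i =>
    Submodule.map (LinearMap.mulLeft K (e i)) (⊤ : Submodule K carrier)
  enough_right : DirectSum.IsInternal fun i =>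
    Submodule.map (LinearMap.mulRight K (e i)) (⊤ : Submodule K carrier)
  d : carrier →ₗ[K] carrier
  d_deg : ∀ {i : ℤ} {a : carrier}, a ∈ deg i → d a ∈ deg (i + 1)
  d_sq : ∀ a, d (d a) = 0
  d_e : ∀ i, d (e i) = 0
  leibniz : ∀ {i : ℤ} {a : carrier}, a ∈ deg i → ∀ b : carrier,
    d (a * b) = d a * b + sgn i • (a * d b)

attribute [instance] DGAlgebra.ring DGAlgebra.mod DGAlgebra.smulComm
  DGAlgebra.tower DGAlgebra.decEq

variable (K : Type) [CommRing K]

/-- A (unitary) right differential graded module over a dg algebra with enough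
idempotents `A`: a graded `K`-module with a right `A`-action (written as a
`K`-bilinear map `act`), compatible with the gradings, unitary
(`M = ⊕ M·eᵢ` internally), together with a square-zero degree `+1`
differential satisfying the graded Leibniz rule. -/
structure DGMod (A : DGAlgebra K) : Type 1 where
  carrier : Type
  [addgrp : AddCommGroup carrier]
  [mod : Module K carrier]
  deg : ℤ → Submodule K carrier
  internal : DirectSum.IsInternal deg
  act : carrier →ₗ[K] A.carrier →ₗ[K] carrier
  act_act : ∀ (x : carrier) (a b : A.carrier), act (act x a) b = act x (a * b)
  act_deg : ∀ {i j : ℤ} {x : carrier} {a : A.carrier},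
    x ∈ deg i → a ∈ A.deg j → act x a ∈ deg (i + j)
  unital : DirectSum.IsInternal fun i =>
    Submodule.map (act.flip (A.e i)) (⊤ : Submodule K carrier)
  d : carrier →ₗ[K] carrier
  d_deg : ∀ {i : ℤ} {x : carrier}, x ∈ deg i → d x ∈ deg (i + 1)
  d_sq : ∀ x, d (d x) = 0
  leibniz : ∀ {i : ℤ} {x : carrier}, x ∈ deg i → ∀ a : A.carrier,
    d (act x a) = act (d x) a + sgn i • act x (A.d a)

attribute [instance] DGMod.addgrp DGMod.mod

variable {K}

/-- The `K`-submodule `HOM_A(M,N)^n` of homogeneous `A`-linear maps of degree `n`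
between right dg `A`-modules: graded maps raising degrees by `n` which commute
with the right `A`-action. -/
def homDeg {A : DGAlgebra K} (M N : DGMod K A) (n : ℤ) :
    Submodule K (M.carrier →ₗ[K] N.carrier) where
  carrier := { f | (∀ (k : ℤ) (x : M.carrier), x ∈ M.deg k → f x ∈ N.deg (k + n)) ∧
      ∀ (x : M.carrier) (a : A.carrier), f (M.act x a) = N.act (f x) a }
  add_mem' := by
    rintro f g ⟨hf1, hf2⟩ ⟨hg1, hg2⟩
    refine ⟨fun k x hx => ?_, fun x a => ?_⟩
    · simpa using Submodule.add_mem _ (hf1 k x hx) (hg1 k x hx)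
    · simp [hf2 x a, hg2 x a]
  zero_mem' := by
    refine ⟨fun k x _ => by simp, fun x a => by simp⟩
  smul_mem' := by
    rintro c f ⟨hf1, hf2⟩
    refine ⟨fun k x hx => ?_, fun x a => ?_⟩
    · simpa using Submodule.smul_mem _ c (hf1 k x hx)
    · simp [hf2 x a]

/-- The differential of a Hom-complex, on maps regarded as homogeneous of
degree `n`: `D(f) = d_N ∘ f - (-1)^n • (f ∘ d_M)`. -/
def Dmap {M N : Type} [AddCommGroup M] [Module K M]
    [AddCommGroup N] [Module K N] (dM : M →ₗ[K] M) (dN : N →ₗ[K] N) (n : ℤ)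
    (f : M →ₗ[K] N) : M →ₗ[K] N :=
  dN ∘ₗ f - sgn n • (f ∘ₗ dM)

/-- The differential of the Hom-complex `HOM_A(M,N)`, on maps regarded as
homogeneous of degree `n`:  `d(f) = d_N ∘ f - (-1)^n f ∘ d_M`. -/
def Dhom {A : DGAlgebra K} (M N : DGMod K A) (n : ℤ)
    (f : M.carrier →ₗ[K] N.carrier) : M.carrier →ₗ[K] N.carrier :=
  Dmap M.d N.d n f

lemma homDeg_comp {A : DGAlgebra K} {M N P : DGMod K A} {m n : ℤ}
    {g : N.carrier →ₗ[K] P.carrier} {f : M.carrier →ₗ[K] N.carrier}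
    (hg : g ∈ homDeg N P m) (hf : f ∈ homDeg M N n) :
    g ∘ₗ f ∈ homDeg M P (m + n) := by
  refine ⟨fun k x hx => ?_, fun x a => ?_⟩
  · have := hg.1 _ _ (hf.1 k x hx)
    rwa [show k + n + m = k + (m + n) by ring] at this
  · simp [LinearMap.comp_apply, hf.2 x a, hg.2]


/-- A (unitary) differential graded `B`-`A`-bimodule over dg algebras with
enough idempotents `B` (acting on the left) and `A` (acting on the right):
a graded `K`-module with commuting unitary left `B`- and right `A`-actions
compatible with the gradings, together with a square-zero degree `+1`
differential satisfying the graded Leibniz rules on both sides (equivalently,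
the combined Leibniz rule `d(bxa) = d(b)xa + (-1)^{|b|} b d(x) a +
(-1)^{|b|+|x|} bx d(a)`). -/
structure DGBimod (K : Type) [CommRing K] (B A : DGAlgebra K) : Type 1 where
  carrier : Type
  [addgrp : AddCommGroup carrier]
  [mod : Module K carrier]
  deg : ℤ → Submodule K carrier
  internal : DirectSum.IsInternal deg
  lact : B.carrier →ₗ[K] carrier →ₗ[K] carrier
  ract : carrier →ₗ[K] A.carrier →ₗ[K] carrier
  lact_lact : ∀ (b b' : B.carrier) (x : carrier), lact (b * b') x = lact b (lact b' x)
  ract_ract : ∀ (x : carrier) (a a' : A.carrier), ract (ract x a) a' = ract x (a * a')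
  middle : ∀ (b : B.carrier) (x : carrier) (a : A.carrier),
    ract (lact b x) a = lact b (ract x a)
  lact_deg : ∀ {i j : ℤ} {b : B.carrier} {x : carrier},
    b ∈ B.deg i → x ∈ deg j → lact b x ∈ deg (i + j)
  ract_deg : ∀ {i j : ℤ} {x : carrier} {a : A.carrier},
    x ∈ deg i → a ∈ A.deg j → ract x a ∈ deg (i + j)
  lunital : DirectSum.IsInternal fun i =>
    Submodule.map (lact (B.e i)) (⊤ : Submodule K carrier)
  runital : DirectSum.IsInternal fun i =>
    Submodule.map (ract.flip (A.e i)) (⊤ : Submodule K carrier)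
  d : carrier →ₗ[K] carrier
  d_deg : ∀ {i : ℤ} {x : carrier}, x ∈ deg i → d x ∈ deg (i + 1)
  d_sq : ∀ x, d (d x) = 0
  leibniz_l : ∀ {i : ℤ} {b : B.carrier}, b ∈ B.deg i → ∀ x : carrier,
    d (lact b x) = lact (B.d b) x + sgn i • lact b (d x)
  leibniz_r : ∀ {i : ℤ} {x : carrier}, x ∈ deg i → ∀ a : A.carrier,
    d (ract x a) = ract (d x) a + sgn i • ract x (A.d a)

attribute [instance] DGBimod.addgrp DGBimod.mod

variable {K : Type} [CommRing K]

/-- A dg bimodule is acyclic when all its homology vanishes. -/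
def DGBimod.IsAcyclic {B A : DGAlgebra K} (X : DGBimod K B A) : Prop :=
  ∀ (n : ℤ) (x : X.carrier), x ∈ X.deg n → X.d x = 0 →
    ∃ y ∈ X.deg (n - 1), X.d y = x

/-- The `K`-submodule `HOM_A(M,X)ⁿ` of homogeneous maps of degree `n` which are
linear for the right `A`-actions, between bimodules `M` (a `C`-`A`-bimodule)
and `X` (a `B`-`A`-bimodule). -/
def homDegRA {C B A : DGAlgebra K} (M : DGBimod K C A) (X : DGBimod K B A)
    (n : ℤ) : Submodule K (M.carrier →ₗ[K] X.carrier) where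
  carrier := { f | (∀ (k : ℤ) (x : M.carrier), x ∈ M.deg k → f x ∈ X.deg (k + n)) ∧
      ∀ (x : M.carrier) (a : A.carrier), f (M.ract x a) = X.ract (f x) a }
  add_mem' := by
    rintro f g ⟨hf1, hf2⟩ ⟨hg1, hg2⟩
    refine ⟨fun k x hx => ?_, fun x a => ?_⟩
    · simpa using Submodule.add_mem _ (hf1 k x hx) (hg1 k x hx)
    · simp [hf2 x a, hg2 x a]
  zero_mem' := ⟨fun k x _ => by simp, fun x a => by simp⟩
  smul_mem' := by
    rintro c f ⟨hf1, hf2⟩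
    refine ⟨fun k x hx => ?_, fun x a => ?_⟩
    · simpa using Submodule.smul_mem _ c (hf1 k x hx)
    · simp [hf2 x a]

/-- The `K`-submodule of homogeneous `B`-`C`-bimodule morphisms of degree `n`
between dg `B`-`C`-bimodules: graded maps of degree `n` which are right
`C`-linear and left `B`-linear up to the Koszul sign
`f(bx) = (-1)^{n|b|} b f(x)`. -/
def homDegBB {B C : DGAlgebra K} (U V : DGBimod K B C) (n : ℤ) :
    Submodule K (U.carrier →ₗ[K] V.carrier) where
  carrier := { f | (∀ (k : ℤ) (x : U.carrier), x ∈ U.deg k → f x ∈ V.deg (k + n)) ∧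
      (∀ (x : U.carrier) (c : C.carrier), f (U.ract x c) = V.ract (f x) c) ∧
      ∀ (q : ℤ) (b : B.carrier), b ∈ B.deg q → ∀ x : U.carrier,
        f (U.lact b x) = sgn (n * q) • V.lact b (f x) }
  add_mem' := by
    rintro f g ⟨hf1, hf2, hf3⟩ ⟨hg1, hg2, hg3⟩
    refine ⟨fun k x hx => ?_, fun x c => ?_, fun q b hb x => ?_⟩
    · simpa using Submodule.add_mem _ (hf1 k x hx) (hg1 k x hx)
    · simp [hf2 x c, hg2 x c]
    · simp [hf3 q b hb x, hg3 q b hb x, smul_add]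
  zero_mem' := ⟨fun k x _ => by simp, fun x c => by simp, fun q b _ x => by simp⟩
  smul_mem' := by
    rintro r f ⟨hf1, hf2, hf3⟩
    refine ⟨fun k x hx => ?_, fun x c => ?_, fun q b hb x => ?_⟩
    · simpa using Submodule.smul_mem _ r (hf1 k x hx)
    · simp [hf2 x c]
    · simp [hf3 q b hb x, smul_comm r]

/-- Membership in the unitarization `HOM̄_A(M,X) = B·HOM_A(M,X)·C` of the
non-unitary graded `B`-`C`-bimodule `HOM_A(M,X)`: the image of `f` is contained
in `⊕_{i ∈ I'} eᵢX` for a finite set `I'` of idempotents of `B`, and `f`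
annihilates `ν_k·M` for all but finitely many idempotents `ν_k` of `C`. -/
def barMem {C B A : DGAlgebra K} (M : DGBimod K C A) (X : DGBimod K B A)
    (f : M.carrier →ₗ[K] X.carrier) : Prop :=
  (∃ s : Finset B.ι, ∀ m : M.carrier, (∑ i ∈ s, X.lact (B.e i) (f m)) = f m) ∧
  (∃ t : Finset C.ι, ∀ k ∉ t, ∀ m : M.carrier, f (M.lact (C.e k) m) = 0)

variable {K : Type} [CommRing K]

/-- A right dg module is acyclic when all its homology vanishes. -/
def DGMod.IsAcyclic {A : DGAlgebra K} (M : DGMod K A) : Prop :=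
  ∀ (n : ℤ) (x : M.carrier), x ∈ M.deg n → M.d x = 0 →
    ∃ y ∈ M.deg (n - 1), M.d y = x

/-- Homogeneous maps of degree `n` from a dg `C`-`A`-bimodule to a right dg
`A`-module which are linear for the right `A`-actions. -/
def homDegBM {C A : DGAlgebra K} (M : DGBimod K C A) (N : DGMod K A) (n : ℤ) :
    Submodule K (M.carrier →ₗ[K] N.carrier) where
  carrier := { f | (∀ (k : ℤ) (x : M.carrier), x ∈ M.deg k → f x ∈ N.deg (k + n)) ∧
      ∀ (x : M.carrier) (a : A.carrier), f (M.ract x a) = N.act (f x) a }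
  add_mem' := by
    rintro f g ⟨hf1, hf2⟩ ⟨hg1, hg2⟩
    refine ⟨fun k x hx => ?_, fun x a => ?_⟩
    · simpa using Submodule.add_mem _ (hf1 k x hx) (hg1 k x hx)
    · simp [hf2 x a, hg2 x a]
  zero_mem' := ⟨fun k x _ => by simp, fun x a => by simp⟩
  smul_mem' := by
    rintro c f ⟨hf1, hf2⟩
    refine ⟨fun k x hx => ?_, fun x a => ?_⟩
    · simpa using Submodule.smul_mem _ c (hf1 k x hx)
    · simp [hf2 x a]

/-- Homogeneous maps of degree `n` from a right dg `A`-module to a dg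
`C`-`A`-bimodule which are linear for the right `A`-actions. -/
def homDegMB {C A : DGAlgebra K} (N : DGMod K A) (Q : DGBimod K C A) (n : ℤ) :
    Submodule K (N.carrier →ₗ[K] Q.carrier) where
  carrier := { f | (∀ (k : ℤ) (x : N.carrier), x ∈ N.deg k → f x ∈ Q.deg (k + n)) ∧
      ∀ (x : N.carrier) (a : A.carrier), f (N.act x a) = Q.ract (f x) a }
  add_mem' := by
    rintro f g ⟨hf1, hf2⟩ ⟨hg1, hg2⟩
    refine ⟨fun k x hx => ?_, fun x a => ?_⟩
    · simpa using Submodule.add_mem _ (hf1 k x hx) (hg1 k x hx)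
    · simp [hf2 x a, hg2 x a]
  zero_mem' := ⟨fun k x _ => by simp, fun x a => by simp⟩
  smul_mem' := by
    rintro c f ⟨hf1, hf2⟩
    refine ⟨fun k x hx => ?_, fun x a => ?_⟩
    · simpa using Submodule.smul_mem _ c (hf1 k x hx)
    · simp [hf2 x a]

/-- A dg `C`-`A`-bimodule `P` is homotopically projective as a right dg
`A`-module when `HOM_A(P,N)` is an acyclic dg `K`-module for every acyclic
right dg `A`-module `N`. -/
def IsHtpyProjRight {C A : DGAlgebra K} (P : DGBimod K C A) : Prop :=
  ∀ N : DGMod K A, N.IsAcyclic →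
    ∀ (n : ℤ) (f : P.carrier →ₗ[K] N.carrier), f ∈ homDegBM P N n →
      Dmap P.d N.d n f = 0 →
      ∃ g ∈ homDegBM P N (n - 1), f = Dmap P.d N.d (n - 1) g

/-- A dg `C`-`A`-bimodule `Q` is homotopically injective as a right dg
`A`-module when `HOM_A(N,Q)` is an acyclic dg `K`-module for every acyclic
right dg `A`-module `N`. -/
def IsHtpyInjRight {C A : DGAlgebra K} (Q : DGBimod K C A) : Prop :=
  ∀ N : DGMod K A, N.IsAcyclic →
    ∀ (n : ℤ) (f : N.carrier →ₗ[K] Q.carrier), f ∈ homDegMB N Q n →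
      Dmap N.d Q.d n f = 0 →
      ∃ g ∈ homDegMB N Q (n - 1), f = Dmap N.d Q.d (n - 1) g

/-! A cycle `f` of `HOM̄_A(M,X)` is in particular a cycle of the full complex `HOM_A(M,X)`,
which is acyclic by the homotopical hypothesis, so `f = D g` for some right `A`-linear `g`.
This `g` need not lie in the unitarization, but `f` only sees finitely many idempotents on
each side: with `e = ∑_{i ∈ s} eᵢ` and `ν = ∑_{k ∈ t} νₖ` we have `f = e f ν`, and since
the idempotents are cycles of degree `0`, `e g ν` lies in `HOM̄_A(M,X)` with
`D(e g ν) = e (D g) ν = f`. -/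

lemma Dmap_comp_comp {M N : Type} [AddCommGroup M] [Module K M] [AddCommGroup N] [Module K N]
    {dM p : M →ₗ[K] M} {dN q : N →ₗ[K] N} (hp : dM ∘ₗ p = p ∘ₗ dM) (hq : dN ∘ₗ q = q ∘ₗ dN)
    (n : ℤ) (g : M →ₗ[K] N) :
    Dmap dM dN n (q ∘ₗ g ∘ₗ p) = q ∘ₗ Dmap dM dN n g ∘ₗ p := by
  simp only [Dmap, LinearMap.sub_comp, LinearMap.comp_sub, LinearMap.smul_comp,
    LinearMap.comp_smul, LinearMap.comp_assoc, hp]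
  rw [← LinearMap.comp_assoc, hq, LinearMap.comp_assoc]

namespace DGBimod

variable {B A : DGAlgebra K} (X : DGBimod K B A)

def toDGMod : DGMod K A where
  carrier := X.carrier
  deg := X.deg
  internal := X.internal
  act := X.ract
  act_act := X.ract_ract
  act_deg := X.ract_deg
  unital := X.runital
  d := X.d
  d_deg := X.d_deg
  d_sq := X.d_sq
  leibniz := X.leibniz_r

def idemProj (s : Finset B.ι) : X.carrier →ₗ[K] X.carrier := ∑ i ∈ s, X.lact (B.e i)

variable (s : Finset B.ι)

lemma idemProj_apply (x : X.carrier) : X.idemProj s x = ∑ i ∈ s, X.lact (B.e i) x := by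
  simp [idemProj]

lemma d_comp_idemProj : X.d ∘ₗ X.idemProj s = X.idemProj s ∘ₗ X.d := by
  ext x
  simp [idemProj_apply, X.leibniz_l (B.e_deg _), B.d_e, sgn]

lemma idemProj_mem_deg {k : ℤ} {x : X.carrier} (hx : x ∈ X.deg k) :
    X.idemProj s x ∈ X.deg k := by
  rw [idemProj_apply]
  exact Submodule.sum_mem _ fun i _ => by simpa using X.lact_deg (B.e_deg i) hx

lemma idemProj_ract (x : X.carrier) (a : A.carrier) :
    X.idemProj s (X.ract x a) = X.ract (X.idemProj s x) a := by
  simp [idemProj_apply, X.middle]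

variable {s}

lemma idemProj_lact_of_mem {i : B.ι} (hi : i ∈ s) (x : X.carrier) :
    X.idemProj s (X.lact (B.e i) x) = X.lact (B.e i) x := by
  rw [idemProj_apply, Finset.sum_eq_single_of_mem i hi, ← X.lact_lact, B.e_idem]
  intro j _ hji
  rw [← X.lact_lact, B.e_orth hji, map_zero, LinearMap.zero_apply]

lemma idemProj_lact_of_notMem {i : B.ι} (hi : i ∉ s) (x : X.carrier) :
    X.idemProj s (X.lact (B.e i) x) = 0 := by
  rw [idemProj_apply]
  refine Finset.sum_eq_zero fun j hj => ?_
  rw [← X.lact_lact, B.e_orth (ne_of_mem_of_not_mem hj hi), map_zero, LinearMap.zero_apply]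

lemma idemProj_idemProj (x : X.carrier) : X.idemProj s (X.idemProj s x) = X.idemProj s x := by
  conv_lhs => rw [X.idemProj_apply s x, map_sum]
  rw [Finset.sum_congr rfl fun i hi => X.idemProj_lact_of_mem hi x, idemProj_apply]

/-- Unitarity `X = ⊕ eᵢX` is what makes a map vanishing on `eᵢX` for `i ∉ s` factor
through `∑_{i ∈ s} eᵢ`. -/
lemma comp_idemProj_of_lact_eq_zero {V : Type} [AddCommGroup V] [Module K V]
    {f : X.carrier →ₗ[K] V} (hf : ∀ i ∉ s, ∀ x : X.carrier, f (X.lact (B.e i) x) = 0) :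
    f ∘ₗ X.idemProj s = f := by
  ext x
  have hx : x ∈ ⨆ i, Submodule.map (X.lact (B.e i)) ⊤ := by
    rw [X.lunital.submodule_iSup_eq_top]; trivial
  induction hx using Submodule.iSup_induction' with
  | mem i _ hy =>
    obtain ⟨y, -, rfl⟩ := hy
    by_cases hi : i ∈ s
    · rw [LinearMap.comp_apply, X.idemProj_lact_of_mem hi]
    · rw [LinearMap.comp_apply, X.idemProj_lact_of_notMem hi, map_zero, hf i hi]
  | zero => simp
  | add y z _ _ hy hz => simp only [map_add, hy, hz]

end DGBimod

section Unitarization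

variable {C B A : DGAlgebra K} {M : DGBimod K C A} {Y : DGBimod K B A}

lemma idemProj_comp_comp_mem_homDegRA {n : ℤ} {g : M.carrier →ₗ[K] Y.carrier}
    (hg : g ∈ homDegRA M Y n) (s : Finset B.ι) (t : Finset C.ι) :
    Y.idemProj s ∘ₗ g ∘ₗ M.idemProj t ∈ homDegRA M Y n := by
  refine ⟨fun k x hx => ?_, fun x a => ?_⟩
  · exact Y.idemProj_mem_deg s (hg.1 k _ (M.idemProj_mem_deg t hx))
  · simp only [LinearMap.comp_apply, M.idemProj_ract, hg.2, Y.idemProj_ract]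

lemma barMem_idemProj_comp_comp (g : M.carrier →ₗ[K] Y.carrier) (s : Finset B.ι)
    (t : Finset C.ι) : barMem M Y (Y.idemProj s ∘ₗ g ∘ₗ M.idemProj t) := by
  refine ⟨⟨s, fun x => ?_⟩, ⟨t, fun k hk x => ?_⟩⟩
  · rw [← Y.idemProj_apply, LinearMap.comp_apply, Y.idemProj_idemProj]
  · simp [M.idemProj_lact_of_notMem hk]

lemma exists_idemProj_comp_comp_eq_of_barMem {f : M.carrier →ₗ[K] Y.carrier}
    (hf : barMem M Y f) : ∃ s t, Y.idemProj s ∘ₗ f ∘ₗ M.idemProj t = f := by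
  obtain ⟨⟨s, hs⟩, ⟨t, ht⟩⟩ := hf
  refine ⟨s, t, ?_⟩
  rw [M.comp_idemProj_of_lact_eq_zero ht]
  ext x
  simp only [LinearMap.comp_apply, Y.idemProj_apply, hs]

lemma exists_barMem_of_eq_Dmap {n : ℤ} {f g : M.carrier →ₗ[K] Y.carrier} (hf : barMem M Y f)
    (hg : g ∈ homDegRA M Y n) (hfg : f = Dmap M.d Y.d n g) :
    ∃ g' : M.carrier →ₗ[K] Y.carrier, g' ∈ homDegRA M Y n ∧
      barMem M Y g' ∧ f = Dmap M.d Y.d n g' := by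
  obtain ⟨s, t, hst⟩ := exists_idemProj_comp_comp_eq_of_barMem hf
  refine ⟨_, idemProj_comp_comp_mem_homDegRA hg s t, barMem_idemProj_comp_comp g s t, ?_⟩
  rw [Dmap_comp_comp (M.d_comp_idemProj t) (Y.d_comp_idemProj s), ← hfg, hst]

end Unitarization

/-- **Statement 19.**  Let `A`, `B`, `C` be dg algebras with enough idempotents
and let `P`, `Q` be dg `C`-`A`-bimodules such that `P` is homotopically
projective and `Q` is homotopically injective as right dg `A`-modules.  Then:
(1) the functor `HOM̄_A(P,?) : B-Dg-A → B-Dg-C` takes acyclic dg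
`B`-`A`-bimodules to acyclic dg `B`-`C`-bimodules; (2) the functor
`HOM̄_A(?,Q) : (B-Dg-A)^{op} → C-Dg-B` takes acyclic dg `B`-`A`-bimodules to
acyclic dg `C`-`B`-bimodules.  (Acyclicity of the unitarizations `HOM̄` is
expressed degreewise: every homogeneous cycle of `HOM̄` is the boundary of an
element of `HOM̄`.) -/
theorem barHom_preserves_acyclics {K : Type} [CommRing K] {A B C : DGAlgebra K}
    (P Q : DGBimod K C A) (hP : IsHtpyProjRight P) (hQ : IsHtpyInjRight Q) :
    (∀ X : DGBimod K B A, X.IsAcyclic →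
      ∀ (n : ℤ) (f : P.carrier →ₗ[K] X.carrier), f ∈ homDegRA P X n →
        barMem P X f → Dmap P.d X.d n f = 0 →
        ∃ g : P.carrier →ₗ[K] X.carrier, g ∈ homDegRA P X (n - 1) ∧
          barMem P X g ∧ f = Dmap P.d X.d (n - 1) g) ∧
    (∀ X : DGBimod K B A, X.IsAcyclic →
      ∀ (n : ℤ) (f : X.carrier →ₗ[K] Q.carrier), f ∈ homDegRA X Q n →
        barMem X Q f → Dmap X.d Q.d n f = 0 →
        ∃ g : X.carrier →ₗ[K] Q.carrier, g ∈ homDegRA X Q (n - 1) ∧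
          barMem X Q g ∧ f = Dmap X.d Q.d (n - 1) g) := by
  refine ⟨fun X hX n f hf hbar hdf => ?_, fun X hX n f hf hbar hdf => ?_⟩
  · obtain ⟨g, hg, hfg⟩ := hP X.toDGMod hX n f hf hdf
    exact exists_barMem_of_eq_Dmap hbar hg hfg
  · obtain ⟨g, hg, hfg⟩ := hQ X.toDGMod hX n f hf hdf
    exact exists_barMem_of_eq_Dmap hbar hg hfg

end
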